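/- Let H and L be real Hilbert spaces and j : H → L a linear isometry. Let u, w ∈ H, let g ∈ L, let S : H → ℝ be a continuous linear functional, and define the continuous linear functional R : H → ℝ by R(φ) = ⟪j u − g, j φ⟫_L + S(φ). Then, with ‖·‖ denoting the operator (dual) norm on functionals, ‖j u − g‖_L² + ‖S‖² ≤ 18 (‖R‖² + ‖g − j w‖_L²) − 12 S(u − w). -/
import Mathlib


open scoped RealInnerProductSpace

/-- Abstract Hilbert-space form of Lemma 3.1: the error and the dual norm of the
Lagrange-multiplier difference are controlled by the residual functional, the
nonconformity term, and the duality term `S (u - w)`. -/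
theorem abstract_reliability_bound
    {H L : Type*} [NormedAddCommGroup H] [InnerProductSpace ℝ H]
    [NormedAddCommGroup L] [InnerProductSpace ℝ L]
    (j : H →ₗᵢ[ℝ] L) (u w : H) (g : L) (S R : H →L[ℝ] ℝ)
    (hR : ∀ φ : H, R φ = ⟪j u - g, j φ⟫ + S φ) :
    ‖j u - g‖ ^ 2 + ‖S‖ ^ 2 ≤ 18 * (‖R‖ ^ 2 + ‖g - j w‖ ^ 2) - 12 * S (u - w) := by
  set e := j u - g with he
  have hjuw : j (u - w) = e + (g - j w) := by
    rw [map_sub, he]; abel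
  have hnorm_uw : ‖u - w‖ ≤ ‖e‖ + ‖g - j w‖ := by
    rw [← j.norm_map (u - w), hjuw]; exact norm_add_le _ _
  have h2 : ‖e‖ ^ 2 = R (u - w) - S (u - w) - ⟪e, g - j w⟫ := by
    have h1 : R (u - w) = ⟪e, j (u - w)⟫ + S (u - w) := hR (u - w)
    rw [hjuw, inner_add_right] at h1
    have := real_inner_self_eq_norm_sq e
    linarith
  have hRuw : R (u - w) ≤ ‖R‖ * (‖e‖ + ‖g - j w‖) := by
    calc R (u - w) ≤ ‖R (u - w)‖ := le_abs_self _
      _ ≤ ‖R‖ * ‖u - w‖ := R.le_opNorm _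
      _ ≤ ‖R‖ * (‖e‖ + ‖g - j w‖) :=
          mul_le_mul_of_nonneg_left hnorm_uw (norm_nonneg _)
  have hinner : -⟪e, g - j w⟫ ≤ ‖e‖ * ‖g - j w‖ := by
    have h := abs_real_inner_le_norm e (g - j w)
    have := neg_abs_le (⟪e, g - j w⟫ : ℝ)
    linarith
  have hkey : ‖e‖ ^ 2 ≤ ‖R‖ * (‖e‖ + ‖g - j w‖) + ‖e‖ * ‖g - j w‖ - S (u - w) := by
    linarith
  have hS : ‖S‖ ≤ ‖R‖ + ‖e‖ := by
    apply ContinuousLinearMap.opNorm_le_bound _ (by positivity)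
    intro φ
    have hs : S φ = R φ - ⟪e, j φ⟫ := by rw [hR]; ring
    calc ‖S φ‖ = ‖R φ - ⟪e, j φ⟫‖ := by rw [hs]
      _ ≤ ‖R φ‖ + ‖(⟪e, j φ⟫ : ℝ)‖ := norm_sub_le _ _
      _ ≤ ‖R‖ * ‖φ‖ + ‖e‖ * ‖φ‖ := by
          refine add_le_add (R.le_opNorm φ) ?_
          rw [Real.norm_eq_abs]
          calc |(⟪e, j φ⟫ : ℝ)| ≤ ‖e‖ * ‖j φ‖ := abs_real_inner_le_norm _ _
            _ = ‖e‖ * ‖φ‖ := by rw [j.norm_map]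
      _ = (‖R‖ + ‖e‖) * ‖φ‖ := by ring
  have hS2 : ‖S‖ * ‖S‖ ≤ (‖R‖ + ‖e‖) * (‖R‖ + ‖e‖) :=
    mul_self_le_mul_self (norm_nonneg _) hS
  nlinarith [norm_nonneg e, norm_nonneg (g - j w), norm_nonneg R, norm_nonneg S,
    sq_nonneg (‖R‖ - ‖e‖), sq_nonneg (‖R‖ - ‖g - j w‖), sq_nonneg (‖e‖ - 2 * ‖g - j w‖)]
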